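/- arXiv:2602.11816 — 2 statements merged into one kernel-verified Lean document; each statement's English description precedes it below -/
import Mathlib

section
/- Let p and q be distinct odd primes with 5 ≤ p < q. In the barycentric subdivision BS(Γ(Z_{pq})), let a_i and a_j be two distinct original vertices corresponding to nonzero multiples of p in Z_{pq}, and let x be any vertex of BS(Γ(Z_{pq})) distinct from a_i and a_j. If d(a_i, x) ≠ 1 and d(a_j, x) ≠ 1, then d(a_i, x) = d(a_j, x), where d denotes graph distance in BS(Γ(Z_{pq})). -/
open SimpleGraph

/-- The nonzero zero-divisors of `ZMod n`. -/
def ZDVert (n : ℕ) : Type :=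
  {a : ZMod n // a ≠ 0 ∧ ∃ b : ZMod n, b ≠ 0 ∧ a * b = 0}

/-- The zero-divisor graph of `ZMod n`: vertices are the nonzero zero-divisors,
with distinct vertices adjacent iff their product is zero. -/
def zdGraph (n : ℕ) : SimpleGraph (ZDVert n) where
  Adj a b := a ≠ b ∧ a.1 * b.1 = 0
  symm := by
    constructor
    rintro a b ⟨hab, h⟩
    exact ⟨hab.symm, by rwa [mul_comm] at h⟩
  loopless := by
    constructor
    rintro a ⟨hne, -⟩
    exact hne rfl

/-- The barycentric subdivision of a simple graph: vertices are the disjoint union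
of the original vertices and the edges, an original vertex is adjacent to an
edge-vertex iff it is an endpoint of that edge, and there are no other adjacencies. -/
def BS {V : Type*} (G : SimpleGraph V) : SimpleGraph (V ⊕ G.edgeSet) where
  Adj x y :=
    (∃ (v : V) (e : G.edgeSet), x = Sum.inl v ∧ y = Sum.inr e ∧ v ∈ e.1) ∨
    (∃ (v : V) (e : G.edgeSet), x = Sum.inr e ∧ y = Sum.inl v ∧ v ∈ e.1)
  symm := by
    constructor
    rintro x y (⟨v, e, rfl, rfl, h⟩ | ⟨v, e, rfl, rfl, h⟩)
    · exact Or.inr ⟨v, e, rfl, rfl, h⟩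
    · exact Or.inl ⟨v, e, rfl, rfl, h⟩
  loopless := by
    constructor
    rintro x (⟨v, e, rfl, h, -⟩ | ⟨v, e, rfl, h, -⟩) <;> simp at h

/-- A set of vertices is resolving if any two distinct vertices are distinguished
by their distance to some vertex of the set. -/
def IsResolving {V : Type*} (G : SimpleGraph V) (W : Set V) : Prop :=
  ∀ x y : V, x ≠ y → ∃ w ∈ W, G.dist x w ≠ G.dist y w

/-- The metric dimension: the least cardinality of a (finite) resolving set. -/
noncomputable def metricDim {V : Type*} (G : SimpleGraph V) : ℕ :=
  sInf {k | ∃ W : Finset V, IsResolving G ↑W ∧ W.card = k}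

/-- The independent metric dimension: the least cardinality of a (finite)
resolving set that is also an independent set. -/
noncomputable def indepMetricDim {V : Type*} (G : SimpleGraph V) : ℕ :=
  sInf {k | ∃ W : Finset V, IsResolving G ↑W ∧
    (∀ a ∈ W, ∀ b ∈ W, ¬ G.Adj a b) ∧ W.card = k}

section AuxGraph

variable {V : Type*} {G : SimpleGraph V}

lemma bs_adj_inl_inr {v : V} {e : G.edgeSet} :
    (BS G).Adj (Sum.inl v) (Sum.inr e) ↔ v ∈ e.1 := by
  constructor
  · rintro (⟨v', e', h1, h2, h⟩ | ⟨v', e', h1, h2, h⟩) <;> simp_all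
  · intro h; exact Or.inl ⟨v, e, rfl, rfl, h⟩

lemma bs_adj_inr_inl {v : V} {e : G.edgeSet} :
    (BS G).Adj (Sum.inr e) (Sum.inl v) ↔ v ∈ e.1 := by
  rw [(BS G).adj_comm, bs_adj_inl_inr]

lemma bs_not_adj_inl_inl {u v : V} : ¬ (BS G).Adj (Sum.inl u) (Sum.inl v) := by
  rintro (⟨v', e', h1, h2, h⟩ | ⟨v', e', h1, h2, h⟩) <;> simp_all

lemma bs_walk_parity {x y : V ⊕ G.edgeSet} (w : (BS G).Walk x y) :
    w.length % 2 = (if x.isLeft = y.isLeft then 0 else 1) := by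
  induction w with
  | nil => simp
  | @cons a b c h w ih =>
    rw [Walk.length_cons]
    rcases h with ⟨v', e', rfl, rfl, -⟩ | ⟨v', e', rfl, rfl, -⟩ <;>
      rcases c with c | c <;> simp_all <;> omega

end AuxGraph

section AuxZd

lemma mulZero_iff (n : ℕ) [NeZero n] (a b : ZMod n) : a * b = 0 ↔ n ∣ a.val * b.val := by
  rw [← ZMod.natCast_eq_zero_iff, Nat.cast_mul, ZMod.natCast_zmod_val,
    ZMod.natCast_zmod_val]

variable {p q : ℕ}

lemma dvd_val_of_dvd [NeZero (p * q)] {a : ZMod (p * q)} (h : (p : ZMod (p * q)) ∣ a) :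
    p ∣ a.val := by
  obtain ⟨c, rfl⟩ := h
  rw [ZMod.val_mul]
  have h1 : p ∣ (p : ZMod (p * q)).val * c.val := by
    refine Dvd.dvd.mul_right ?_ _
    rw [ZMod.val_natCast]
    exact (Nat.dvd_mod_iff ⟨q, rfl⟩).mpr dvd_rfl
  exact (Nat.dvd_mod_iff ⟨q, rfl⟩).mpr h1

lemma zd_cases (hp : p.Prime) (hq : q.Prime) [NeZero (p * q)] (a : ZDVert (p * q)) :
    p ∣ a.1.val ∨ q ∣ a.1.val := by
  by_contra h
  push_neg at h
  obtain ⟨hne, b, hb0, hab⟩ := a.2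
  have hcop : (a.1.val).Coprime (p * q) :=
    Nat.Coprime.mul_right (hp.coprime_iff_not_dvd.mpr h.1).symm
      (hq.coprime_iff_not_dvd.mpr h.2).symm
  have hu : IsUnit a.1 := by
    have := (ZMod.isUnit_iff_coprime a.1.val (p * q)).mpr hcop
    rwa [ZMod.natCast_zmod_val] at this
  exact hb0 ((hu.mul_right_eq_zero).mp hab)

lemma zd_not_both (hp : p.Prime) (hq : q.Prime) (hne : p ≠ q) [NeZero (p * q)]
    (a : ZDVert (p * q)) : ¬ (p ∣ a.1.val ∧ q ∣ a.1.val) := by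
  rintro ⟨h1, h2⟩
  have hcop : Nat.Coprime p q := (Nat.coprime_primes hp hq).mpr hne
  have hdvd : p * q ∣ a.1.val := hcop.mul_dvd_of_dvd_of_dvd h1 h2
  have hv0 : a.1.val ≠ 0 := fun h => a.2.1 ((ZMod.val_eq_zero a.1).mp h)
  exact absurd (Nat.le_of_dvd (Nat.pos_of_ne_zero hv0) hdvd) (not_le.mpr (ZMod.val_lt a.1))

lemma zd_adj_AB (hp : p.Prime) (hq : q.Prime) (hne : p ≠ q) [NeZero (p * q)]
    {a b : ZDVert (p * q)} (ha : p ∣ a.1.val) (hb : q ∣ b.1.val) :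
    (zdGraph (p * q)).Adj a b := by
  have hcop : Nat.Coprime p q := (Nat.coprime_primes hp hq).mpr hne
  refine ⟨fun h => zd_not_both hp hq hne b ⟨h ▸ ha, hb⟩, ?_⟩
  rw [mulZero_iff]
  exact hcop.mul_dvd_of_dvd_of_dvd (ha.mul_right _) (hb.mul_left _)

lemma zd_not_adj_sameA (hp : p.Prime) (hq : q.Prime) (hne : p ≠ q) [NeZero (p * q)]
    {a b : ZDVert (p * q)} (ha : p ∣ a.1.val) (hb : p ∣ b.1.val) :
    ¬ (zdGraph (p * q)).Adj a b := by
  rintro ⟨-, h0⟩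
  rw [mulZero_iff] at h0
  obtain ⟨m, hm⟩ := ha
  obtain ⟨m', hm'⟩ := hb
  have hq' : q ∣ m * (p * m') := by
    have : p * (q * 1) ∣ p * (m * (p * m')) := by
      rw [mul_one]
      calc p * q ∣ a.1.val * b.1.val := h0
        _ = p * (m * (p * m')) := by rw [hm, hm']; ring
    simpa using (mul_dvd_mul_iff_left (a := p) (Nat.Prime.ne_zero hp)).mp this
  have hqp : ¬ q ∣ p := fun h => hne ((Nat.prime_dvd_prime_iff_eq hq hp).mp h).symm
  have : q ∣ m ∨ q ∣ m' := by
    rcases (Nat.Prime.dvd_mul hq).mp hq' with h | h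
    · exact Or.inl h
    · rcases (Nat.Prime.dvd_mul hq).mp h with h | h
      · exact absurd h hqp
      · exact Or.inr h
  rcases this with h | h
  · exact zd_not_both hp hq hne a ⟨⟨m, hm⟩, hm ▸ h.mul_left p⟩
  · exact zd_not_both hp hq hne b ⟨⟨m', hm'⟩, hm' ▸ h.mul_left p⟩

lemma zd_not_adj_sameB (hp : p.Prime) (hq : q.Prime) (hne : p ≠ q) [NeZero (p * q)]
    {a b : ZDVert (p * q)} (ha : q ∣ a.1.val) (hb : q ∣ b.1.val) :
    ¬ (zdGraph (p * q)).Adj a b := by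
  rintro ⟨-, h0⟩
  rw [mulZero_iff] at h0
  obtain ⟨m, hm⟩ := ha
  obtain ⟨m', hm'⟩ := hb
  have hp' : p ∣ m * (q * m') := by
    have : q * (p * 1) ∣ q * (m * (q * m')) := by
      rw [mul_one]
      calc q * p = p * q := mul_comm q p
        _ ∣ a.1.val * b.1.val := h0
        _ = q * (m * (q * m')) := by rw [hm, hm']; ring
    simpa using (mul_dvd_mul_iff_left (a := q) (Nat.Prime.ne_zero hq)).mp this
  have hpq' : ¬ p ∣ q := fun h => hne ((Nat.prime_dvd_prime_iff_eq hp hq).mp h)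
  have : p ∣ m ∨ p ∣ m' := by
    rcases (Nat.Prime.dvd_mul hp).mp hp' with h | h
    · exact Or.inl h
    · rcases (Nat.Prime.dvd_mul hp).mp h with h | h
      · exact absurd h hpq'
      · exact Or.inr h
  rcases this with h | h
  · exact zd_not_both hp hq hne a ⟨hm ▸ h.mul_left q, ⟨m, hm⟩⟩
  · exact zd_not_both hp hq hne b ⟨hm' ▸ h.mul_left q, ⟨m', hm'⟩⟩

end AuxZd

theorem stmt13 (p q : ℕ) (hp : p.Prime) (hq : q.Prime) (hop : Odd p) (hoq : Odd q)
    (hp5 : 5 ≤ p) (hpq : p < q)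
    (ai aj : ZDVert (p * q))
    (hi : (p : ZMod (p * q)) ∣ ai.1) (hj : (p : ZMod (p * q)) ∣ aj.1)
    (hij : ai ≠ aj)
    (x : ZDVert (p * q) ⊕ (zdGraph (p * q)).edgeSet)
    (hxi : x ≠ Sum.inl ai) (hxj : x ≠ Sum.inl aj)
    (hdi : (BS (zdGraph (p * q))).dist (Sum.inl ai) x ≠ 1)
    (hdj : (BS (zdGraph (p * q))).dist (Sum.inl aj) x ≠ 1) :
    (BS (zdGraph (p * q))).dist (Sum.inl ai) x =
      (BS (zdGraph (p * q))).dist (Sum.inl aj) x := by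
  haveI : NeZero (p * q) := ⟨Nat.mul_ne_zero hp.ne_zero hq.ne_zero⟩
  have hne : p ≠ q := hpq.ne
  have hiv : p ∣ ai.1.val := dvd_val_of_dvd hi
  have hjv : p ∣ aj.1.val := dvd_val_of_dvd hj
  -- a fixed vertex divisible by q
  have hq0 : (q : ZMod (p * q)) ≠ 0 := by
    rw [Ne, ZMod.natCast_eq_zero_iff]
    intro h
    have h1 := Nat.le_of_dvd hq.pos h
    nlinarith [hp.two_le, hq.two_le]
  have hp0 : (p : ZMod (p * q)) ≠ 0 := by
    rw [Ne, ZMod.natCast_eq_zero_iff]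
    intro h
    have h1 := Nat.le_of_dvd hp.pos h
    nlinarith [hp.two_le, hq.two_le]
  have hqp0 : (q : ZMod (p * q)) * (p : ZMod (p * q)) = 0 := by
    rw [← Nat.cast_mul, ZMod.natCast_eq_zero_iff]
    exact ⟨1, by ring⟩
  set b0 : ZDVert (p * q) := ⟨(q : ZMod (p * q)), hq0, (p : ZMod (p * q)), hp0, hqp0⟩ with hb0def
  have hb0 : q ∣ b0.1.val := by
    show q ∣ (q : ZMod (p * q)).val
    rw [ZMod.val_natCast]
    exact (Nat.dvd_mod_iff ⟨p, mul_comm p q⟩).mpr dvd_rfl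
  -- key claims
  have keyB : ∀ c : ZDVert (p * q), q ∣ c.1.val → ∀ a : ZDVert (p * q), p ∣ a.1.val →
      (BS (zdGraph (p * q))).dist (Sum.inl a) (Sum.inl c) = 2 := by
    intro c hc a ha
    have hadj : (zdGraph (p * q)).Adj a c := zd_adj_AB hp hq hne ha hc
    obtain ⟨w0, hw0⟩ : ∃ w : (BS (zdGraph (p * q))).Walk (Sum.inl a) (Sum.inl c),
        w.length = 2 :=
      ⟨.cons ((bs_adj_inl_inr (e := (⟨s(a, c), hadj⟩ : (zdGraph (p * q)).edgeSet))).mpr (Sym2.mem_mk_left a c))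
        (.cons ((bs_adj_inr_inl (e := (⟨s(a, c), hadj⟩ : (zdGraph (p * q)).edgeSet))).mpr (Sym2.mem_mk_right a c)) .nil),
        by simp⟩
    have hub : (BS (zdGraph (p * q))).dist (Sum.inl a) (Sum.inl c) ≤ 2 :=
      hw0 ▸ SimpleGraph.dist_le w0
    have hne' : (Sum.inl a : ZDVert (p * q) ⊕ (zdGraph (p * q)).edgeSet) ≠ Sum.inl c := by
      simp only [Ne, Sum.inl.injEq]
      exact fun h => zd_not_both hp hq hne c ⟨h ▸ ha, hc⟩
    have hne0 : (BS (zdGraph (p * q))).dist (Sum.inl a) (Sum.inl c) ≠ 0 :=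
      SimpleGraph.dist_ne_zero_iff_ne_and_reachable.mpr ⟨hne', ⟨w0⟩⟩
    obtain ⟨w, hw⟩ := SimpleGraph.exists_walk_of_dist_ne_zero hne0
    have hpar := bs_walk_parity w
    rw [hw] at hpar
    simp at hpar
    omega
  have keyA : ∀ c : ZDVert (p * q), p ∣ c.1.val → ∀ a : ZDVert (p * q), p ∣ a.1.val →
      a ≠ c → (BS (zdGraph (p * q))).dist (Sum.inl a) (Sum.inl c) = 4 := by
    intro c hc a ha hac
    have hadj1 : (zdGraph (p * q)).Adj a b0 := zd_adj_AB hp hq hne ha hb0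
    have hadj2 : (zdGraph (p * q)).Adj c b0 := zd_adj_AB hp hq hne hc hb0
    obtain ⟨w0, hw0⟩ : ∃ w : (BS (zdGraph (p * q))).Walk (Sum.inl a) (Sum.inl c),
        w.length = 4 :=
      ⟨.cons ((bs_adj_inl_inr (e := (⟨s(a, b0), hadj1⟩ : (zdGraph (p * q)).edgeSet))).mpr (Sym2.mem_mk_left a b0))
        (.cons ((bs_adj_inr_inl (e := (⟨s(a, b0), hadj1⟩ : (zdGraph (p * q)).edgeSet))).mpr (Sym2.mem_mk_right a b0))
          (.cons ((bs_adj_inl_inr (e := (⟨s(c, b0), hadj2⟩ : (zdGraph (p * q)).edgeSet))).mpr (Sym2.mem_mk_right c b0))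
            (.cons ((bs_adj_inr_inl (e := (⟨s(c, b0), hadj2⟩ : (zdGraph (p * q)).edgeSet))).mpr (Sym2.mem_mk_left c b0))
              .nil))), by simp⟩
    have hub : (BS (zdGraph (p * q))).dist (Sum.inl a) (Sum.inl c) ≤ 4 :=
      hw0 ▸ SimpleGraph.dist_le w0
    have hne' : (Sum.inl a : ZDVert (p * q) ⊕ (zdGraph (p * q)).edgeSet) ≠ Sum.inl c := by
      simpa using hac
    have hne0 : (BS (zdGraph (p * q))).dist (Sum.inl a) (Sum.inl c) ≠ 0 :=
      SimpleGraph.dist_ne_zero_iff_ne_and_reachable.mpr ⟨hne', ⟨w0⟩⟩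
    obtain ⟨w, hw⟩ := SimpleGraph.exists_walk_of_dist_ne_zero hne0
    have hpar := bs_walk_parity w
    rw [hw] at hpar
    simp at hpar
    -- rule out distance 2
    have hne2 : (BS (zdGraph (p * q))).dist (Sum.inl a) (Sum.inl c) ≠ 2 := by
      intro h2
      rw [h2] at hw
      cases w with
      | nil => simp at hw
      | cons h1 w' =>
        cases w' with
        | nil => simp at hw
        | cons h2' w'' =>
          rename_i z1 z2
          have hl : w''.length = 0 := by
            simp only [Walk.length_cons] at hw
            omega
          have hz2 : z2 = Sum.inl c := SimpleGraph.Walk.eq_of_length_eq_zero hl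
          subst hz2
          cases z1 with
          | inl u => exact bs_not_adj_inl_inl h1
          | inr e =>
            have hae : a ∈ e.1 := bs_adj_inl_inr.mp h1
            have hce : c ∈ e.1 := bs_adj_inr_inl.mp h2'
            have hface : e.1 = s(a, c) :=
              (Sym2.mem_and_mem_iff (by simpa using hac)).mp ⟨hae, hce⟩
            have : (zdGraph (p * q)).Adj a c := by
              have := e.2
              rwa [hface, SimpleGraph.mem_edgeSet] at this
            exact zd_not_adj_sameA hp hq hne ha hc this
    omega
  have keyE : ∀ e : (zdGraph (p * q)).edgeSet, ∀ a : ZDVert (p * q), p ∣ a.1.val →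
      (BS (zdGraph (p * q))).dist (Sum.inl a) (Sum.inr e) ≠ 1 →
      (BS (zdGraph (p * q))).dist (Sum.inl a) (Sum.inr e) = 3 := by
    have hB : ∀ (e : Sym2 (ZDVert (p * q))), e ∈ (zdGraph (p * q)).edgeSet →
        ∃ b : ZDVert (p * q), q ∣ b.1.val ∧ b ∈ e := by
      intro e he
      induction e using Sym2.ind with
      | _ u v =>
        have huv : (zdGraph (p * q)).Adj u v := he
        rcases zd_cases hp hq u with hu | hu
        · rcases zd_cases hp hq v with hv | hv
          · exact absurd huv (zd_not_adj_sameA hp hq hne hu hv)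
          · exact ⟨v, hv, Sym2.mem_mk_right u v⟩
        · exact ⟨u, hu, Sym2.mem_mk_left u v⟩
    intro e a ha h1
    obtain ⟨b, hbq, hbe⟩ := hB e.1 e.2
    have hadj : (zdGraph (p * q)).Adj a b := zd_adj_AB hp hq hne ha hbq
    obtain ⟨w0, hw0⟩ : ∃ w : (BS (zdGraph (p * q))).Walk (Sum.inl a) (Sum.inr e),
        w.length = 3 :=
      ⟨.cons ((bs_adj_inl_inr (e := (⟨s(a, b), hadj⟩ : (zdGraph (p * q)).edgeSet))).mpr (Sym2.mem_mk_left a b))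
        (.cons ((bs_adj_inr_inl (e := (⟨s(a, b), hadj⟩ : (zdGraph (p * q)).edgeSet))).mpr (Sym2.mem_mk_right a b))
          (.cons ((bs_adj_inl_inr (e := e)).mpr hbe) .nil)), by simp⟩
    have hub : (BS (zdGraph (p * q))).dist (Sum.inl a) (Sum.inr e) ≤ 3 :=
      hw0 ▸ SimpleGraph.dist_le w0
    have hne0 : (BS (zdGraph (p * q))).dist (Sum.inl a) (Sum.inr e) ≠ 0 :=
      SimpleGraph.dist_ne_zero_iff_ne_and_reachable.mpr ⟨by simp, ⟨w0⟩⟩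
    obtain ⟨w, hw⟩ := SimpleGraph.exists_walk_of_dist_ne_zero hne0
    have hpar := bs_walk_parity w
    rw [hw] at hpar
    simp at hpar
    omega
  -- case analysis on x
  cases x with
  | inl c =>
    rcases zd_cases hp hq c with hc | hc
    · have h1 := keyA c hc ai hiv (fun h => hxi (by rw [h]))
      have h2 := keyA c hc aj hjv (fun h => hxj (by rw [h]))
      rw [h1, h2]
    · rw [keyB c hc ai hiv, keyB c hc aj hjv]
  | inr e =>
    rw [keyE e ai hiv hdi, keyE e aj hjv hdj]
end

section
/- Let p and q be distinct odd primes with 5 ≤ p < q. In the barycentric subdivision BS(Γ(Z_{pq})), let q_i and q_j be two distinct original vertices corresponding to nonzero multiples of q in Z_{pq}, and let a be any vertex of BS(Γ(Z_{pq})) distinct from q_i and q_j. If d(q_i, a) ≠ 1 and d(q_j, a) ≠ 1, then d(q_i, a) = d(q_j, a), where d denotes graph distance in BS(Γ(Z_{pq})). -/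
open SimpleGraph

section Aux

variable {V W : Type*} {G : SimpleGraph V} {G' : SimpleGraph W}

lemma dist_map_le (φ : G →g G') {x y : V} (h : G.Reachable x y) :
    G'.dist (φ x) (φ y) ≤ G.dist x y := by
  obtain ⟨p, hp⟩ := h.exists_walk_length_eq_dist
  calc G'.dist (φ x) (φ y) ≤ (p.map φ).length := SimpleGraph.dist_le _
    _ = G.dist x y := by rw [SimpleGraph.Walk.length_map, hp]

lemma iso_dist_eq (φ : G ≃g G') (x y : V) :
    G'.dist (φ x) (φ y) = G.dist x y := by
  by_cases h : G.Reachable x y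
  · refine le_antisymm (dist_map_le φ.toHom h) ?_
    have h' : G'.Reachable (φ x) (φ y) := h.map φ.toHom
    have h2 := dist_map_le φ.symm.toHom h'
    simpa using h2
  · rw [SimpleGraph.dist_eq_zero_of_not_reachable h,
      SimpleGraph.dist_eq_zero_of_not_reachable]
    intro h'
    exact h (by simpa using h'.map φ.symm.toHom)

lemma BS_adj_inl_inr (v : V) (e : G.edgeSet) :
    (BS G).Adj (Sum.inl v) (Sum.inr e) ↔ v ∈ e.1 := by
  constructor
  · rintro (⟨v', e', h1, h2, h3⟩ | ⟨v', e', h1, h2, h3⟩)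
    · rw [Sum.inl.injEq] at h1
      rw [Sum.inr.injEq] at h2
      subst h1; subst h2; exact h3
    · exact absurd h1 (by simp)
  · intro h; exact Or.inl ⟨v, e, rfl, rfl, h⟩

lemma BS_adj_inl_inl (v w : V) : ¬ (BS G).Adj (Sum.inl v) (Sum.inl w) := by
  rintro (⟨v', e', h1, h2, h3⟩ | ⟨v', e', h1, h2, h3⟩) <;> simp at h1 h2

lemma BS_adj_inr_inr (e f : G.edgeSet) : ¬ (BS G).Adj (Sum.inr e) (Sum.inr f) := by
  rintro (⟨v', e', h1, h2, h3⟩ | ⟨v', e', h1, h2, h3⟩) <;> simp at h1 h2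

lemma BS_adj_inr_inl (e : G.edgeSet) (v : V) :
    (BS G).Adj (Sum.inr e) (Sum.inl v) ↔ v ∈ e.1 := by
  rw [(BS G).adj_comm]; exact BS_adj_inl_inr v e

/-- An automorphism of `G` induces an automorphism of `BS G`. -/
def BSIso (φ : G ≃g G) : BS G ≃g BS G where
  toEquiv := Equiv.sumCongr φ.toEquiv φ.mapEdgeSet
  map_rel_iff' := by
    rintro (v | e) (w | f)
    · simp only [Equiv.sumCongr_apply, Sum.map_inl]
      constructor <;> (intro h; exact absurd h (BS_adj_inl_inl _ _))
    · simp only [Equiv.sumCongr_apply, Sum.map_inl, Sum.map_inr]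
      rw [BS_adj_inl_inr, BS_adj_inl_inr]
      show φ v ∈ Sym2.map φ f.1 ↔ v ∈ f.1
      constructor
      · intro h
        obtain ⟨a, ha, hav⟩ := Sym2.mem_map.mp h
        rwa [← φ.toEquiv.injective hav]
      · intro h; exact Sym2.mem_map.mpr ⟨v, h, rfl⟩
    · simp only [Equiv.sumCongr_apply, Sum.map_inl, Sum.map_inr]
      rw [BS_adj_inr_inl, BS_adj_inr_inl]
      show φ w ∈ Sym2.map φ e.1 ↔ w ∈ e.1
      constructor
      · intro h
        obtain ⟨a, ha, hav⟩ := Sym2.mem_map.mp h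
        rwa [← φ.toEquiv.injective hav]
      · intro h; exact Sym2.mem_map.mpr ⟨w, h, rfl⟩
    · simp only [Equiv.sumCongr_apply, Sum.map_inr]
      constructor <;> (intro h; exact absurd h (BS_adj_inr_inr _ _))

end Aux

theorem stmt14 (p q : ℕ) (hp : p.Prime) (hq : q.Prime) (hop : Odd p) (hoq : Odd q)
    (hp5 : 5 ≤ p) (hpq : p < q)
    (qi qj : ZDVert (p * q))
    (hi : (q : ZMod (p * q)) ∣ qi.1) (hj : (q : ZMod (p * q)) ∣ qj.1)
    (hij : qi ≠ qj)
    (a : ZDVert (p * q) ⊕ (zdGraph (p * q)).edgeSet)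
    (hai : a ≠ Sum.inl qi) (haj : a ≠ Sum.inl qj)
    (hdi : (BS (zdGraph (p * q))).dist (Sum.inl qi) a ≠ 1)
    (hdj : (BS (zdGraph (p * q))).dist (Sum.inl qj) a ≠ 1) :
    (BS (zdGraph (p * q))).dist (Sum.inl qi) a =
      (BS (zdGraph (p * q))).dist (Sum.inl qj) a := by
  haveI := Fact.mk hp
  haveI := Fact.mk hq
  haveI : DecidableEq (ZDVert (p * q)) := Classical.decEq _
  have hpqne : p ≠ q := Nat.ne_of_lt hpq
  have hco : Nat.Coprime p q := (Nat.coprime_primes hp hq).mpr hpqne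
  set e := ZMod.chineseRemainder hco with he
  have qside : ∀ z : ZMod (p * q), z ≠ 0 → (q : ZMod (p * q)) ∣ z →
      ∀ x : ZMod (p * q), (x * z = 0 ↔ (e x).1 = 0) := by
    intro z hz hdvd x
    have hz2 : (e z).2 = 0 := by
      obtain ⟨c, rfl⟩ := hdvd
      have hmul : e ((q : ZMod (p * q)) * c) = e (q : ZMod (p * q)) * e c := map_mul e _ _
      rw [hmul]
      have hq0 : (e (q : ZMod (p * q))).2 = 0 := by
        rw [map_natCast]
        show ((q : ℕ) : ZMod q) = 0
        exact ZMod.natCast_self q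
      rw [Prod.snd_mul, hq0, zero_mul]
    have hz1 : (e z).1 ≠ 0 := by
      intro h0
      apply hz
      have hez : e z = 0 := Prod.ext h0 hz2
      have := congrArg e.symm hez
      simpa using this
    constructor
    · intro hxz
      have hez : e x * e z = 0 := by rw [← map_mul, hxz, map_zero]
      have h1 : (e x).1 * (e z).1 = 0 := by
        rw [← Prod.fst_mul, hez]
        rfl
      exact (mul_eq_zero.mp h1).resolve_right hz1
    · intro hx1
      have hprod : e (x * z) = 0 := by
        rw [map_mul]
        refine Prod.ext ?_ ?_
        · rw [Prod.fst_mul, hx1, zero_mul]; rfl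
        · rw [Prod.snd_mul, hz2, mul_zero]; rfl
      have := congrArg e.symm hprod
      simpa using this
  have Hsame : ∀ x : ZMod (p * q), x * qi.1 = 0 ↔ x * qj.1 = 0 := fun x =>
    (qside qi.1 qi.2.1 hi x).trans (qside qj.1 qj.2.1 hj x).symm
  have comm : ∀ s t : ZMod (p * q), s * t = 0 ↔ t * s = 0 := fun s t => by
    rw [mul_comm s t]
  have hswap : ∀ (u : ZDVert (p * q)) (y : ZMod (p * q)),
      ((Equiv.swap qi qj) u).1 * y = 0 ↔ u.1 * y = 0 := by
    intro u y
    rcases eq_or_ne u qi with rfl | h1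
    · rw [Equiv.swap_apply_left]
      exact (comm _ _).trans ((Hsame y).symm.trans (comm _ _))
    rcases eq_or_ne u qj with rfl | h2
    · rw [Equiv.swap_apply_right]
      exact (comm _ _).trans ((Hsame y).trans (comm _ _))
    · rw [Equiv.swap_apply_of_ne_of_ne h1 h2]
  let σ : zdGraph (p * q) ≃g zdGraph (p * q) :=
    { toEquiv := Equiv.swap qi qj
      map_rel_iff' := by
        intro a b
        show ((Equiv.swap qi qj) a ≠ (Equiv.swap qi qj) b ∧ _) ↔ (a ≠ b ∧ _)
        constructor
        · rintro ⟨hne, hz⟩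
          refine ⟨fun h => hne (by rw [h]), ?_⟩
          exact (comm _ _).mp ((hswap b _).mp ((comm _ _).mp ((hswap a _).mp hz)))
        · rintro ⟨hne, hz⟩
          refine ⟨fun h => hne ((Equiv.swap qi qj).injective h), ?_⟩
          exact (hswap a _).mpr ((comm _ _).mpr ((hswap b _).mpr ((comm _ _).mp hz))) }
  let Φ : BS (zdGraph (p * q)) ≃g BS (zdGraph (p * q)) := BSIso σ
  have hΦi : Φ (Sum.inl qi) = Sum.inl qj := by
    show Sum.inl (σ qi) = Sum.inl qj
    congr 1
    exact Equiv.swap_apply_left qi qj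
  have hΦa : Φ a = a := by
    rcases a with v | f
    · show Sum.inl (σ v) = Sum.inl v
      congr 1
      have h1 : v ≠ qi := fun h => hai (by rw [h])
      have h2 : v ≠ qj := fun h => haj (by rw [h])
      exact Equiv.swap_apply_of_ne_of_ne h1 h2
    · have hqi : qi ∉ f.1 := by
        intro hmem
        exact hdi (SimpleGraph.dist_eq_one_iff_adj.mpr ((BS_adj_inl_inr qi f).mpr hmem))
      have hqj : qj ∉ f.1 := by
        intro hmem
        exact hdj (SimpleGraph.dist_eq_one_iff_adj.mpr ((BS_adj_inl_inr qj f).mpr hmem))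
      show Sum.inr (σ.mapEdgeSet f) = Sum.inr f
      congr 1
      apply Subtype.ext
      show Sym2.map (⇑σ) f.1 = f.1
      obtain ⟨s, hs⟩ := f
      simp only at hqi hqj ⊢
      induction s with
      | _ x y =>
        have hx1 : x ≠ qi := fun h => hqi (h ▸ Sym2.mem_mk_left x y)
        have hx2 : x ≠ qj := fun h => hqj (h ▸ Sym2.mem_mk_left x y)
        have hy1 : y ≠ qi := fun h => hqi (h ▸ Sym2.mem_mk_right x y)
        have hy2 : y ≠ qj := fun h => hqj (h ▸ Sym2.mem_mk_right x y)
        rw [Sym2.map_pair_eq]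
        have hxx : σ x = x := Equiv.swap_apply_of_ne_of_ne hx1 hx2
        have hyy : σ y = y := Equiv.swap_apply_of_ne_of_ne hy1 hy2
        rw [show (⇑σ) x = x from hxx, show (⇑σ) y = y from hyy]
  calc (BS (zdGraph (p * q))).dist (Sum.inl qi) a
      = (BS (zdGraph (p * q))).dist (Φ (Sum.inl qi)) (Φ a) := (iso_dist_eq Φ _ _).symm
    _ = (BS (zdGraph (p * q))).dist (Sum.inl qj) a := by rw [hΦi, hΦa]
end
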